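/- Let m > 1 be an integer such that both m + 1 and 2m + 1 are prime, and set n = (m+1)(2m+1). Then n is composite, rad(φ(n)) = rad(m), and rad(φ(n)) divides n − 1. -/

import Mathlib

open Finset

/-- The radical of a natural number: the product of its distinct prime divisors. -/
def rad (n : ℕ) : ℕ := ∏ p ∈ n.primeFactors, p

/-!
Since `m + 1` and `2m + 1` are distinct primes, `φ(n) = m · 2m = 2m²`. As `m + 1` is an odd
prime, `m` is even, so `m ∣ 2m² ∣ m³` and `2m²` has the same prime factors as `m`. Finally
`n - 1 = m(2m + 3)` is a multiple of `m`, hence of `rad m`.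
-/

theorem rad_dvd_self (n : ℕ) : rad n ∣ n :=
  Nat.prod_primeFactors_dvd n

theorem rad_eq_of_dvd_of_dvd_pow {a b k : ℕ} (ha : a ≠ 0) (hk : k ≠ 0) (hab : a ∣ b)
    (hba : b ∣ a ^ k) : rad a = rad b := by
  have hak : a ^ k ≠ 0 := pow_ne_zero k ha
  have hb : b ≠ 0 := ne_zero_of_dvd_ne_zero hak hba
  have hsub : b.primeFactors ⊆ a.primeFactors := by
    simpa only [Nat.primeFactors_pow a hk] using Nat.primeFactors_mono hba hak
  unfold rad
  rw [(Nat.primeFactors_mono hab hb).antisymm hsub]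

theorem Nat.totient_mul_of_prime_of_ne {p q : ℕ} (hp : p.Prime) (hq : q.Prime) (hpq : p ≠ q) :
    (p * q).totient = (p - 1) * (q - 1) := by
  rw [Nat.totient_mul ((Nat.coprime_primes hp hq).2 hpq), Nat.totient_prime hp,
    Nat.totient_prime hq]

theorem dickson_pair_in_K
    (m : ℕ) (hm : 1 < m) (hp : (m + 1).Prime) (hq : (2 * m + 1).Prime)
    (n : ℕ) (hn : n = (m + 1) * (2 * m + 1)) :
    (1 < n ∧ ¬ n.Prime) ∧ rad n.totient = rad m ∧ rad n.totient ∣ n - 1 := by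
  have hm_even : 2 ∣ m := by
    simpa using (hp.even_sub_one (by omega)).two_dvd
  have htotient : n.totient = m * (2 * m) := by
    rw [hn, Nat.totient_mul_of_prime_of_ne hp hq (by omega)]
    simp
  have hrad : rad n.totient = rad m := by
    obtain ⟨k, rfl⟩ := hm_even
    rw [htotient]
    refine (rad_eq_of_dvd_of_dvd_pow (by omega) three_ne_zero (dvd_mul_right _ _) ?_).symm
    exact ⟨k, by ring⟩
  have hm_dvd : m ∣ n - 1 := ⟨2 * m + 3, by rw [hn]; ring_nf; omega⟩
  refine ⟨⟨?_, ?_⟩, hrad, hrad ▸ (rad_dvd_self m).trans hm_dvd⟩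
  · rw [hn]; nlinarith
  · rw [hn]; exact Nat.not_prime_mul (by omega) (by omega)
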